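/- Let f, g, h ∈ ℝ[x] be monic with deg f = deg g + 1 = deg h + 2, and suppose f = (x+a)·g + b·h with a ∈ ℝ and b < 0. Then f is real-rooted and interlaced by g if and only if g is real-rooted and interlaced by h. -/

import Mathlib

/-!
If `f` and `g` have a common root `c`, the recurrence forces `h(c) = 0`; dividing `f`, `g`, `h`
by `X - c` preserves the recurrence, and it preserves interlacing in both directions, because in
terms of the counting functions `x ↦ #{roots < x}` a common root shifts both sides equally. By
induction we may therefore assume that `f` and `g` (equivalently `g` and `h`) have no common root,
so that all interlacings involved are strict.

At every root `s` of `g` the recurrence reads `f(s) = b h(s)`, so `f` and `h` change sign between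
the same consecutive roots of `g`. If `f` is strictly interlaced by `g`, exactly one root of `f`
lies between consecutive roots of `g`, so `h` has a root in each of these `deg h` gaps.
Conversely, if `g` is strictly interlaced by `h`, then `f` has a root in each of the `deg h` inner
gaps, and since `b < 0` the signs of `f` at the extreme roots of `g` are opposite to its signs at
`±∞`, which gives the two outer roots.
-/

open Polynomial

/-- `f` has only real roots (counted with multiplicity, as many as its degree) and is
interlaced by `g`: if `t₁ ≤ ⋯ ≤ tₙ` are the roots of `f` and `s₁ ≤ ⋯ ≤ s_{n-1}` those of `g`,
then `t₁ ≤ s₁ ≤ t₂ ≤ ⋯ ≤ t_{n-1} ≤ s_{n-1} ≤ tₙ`. -/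
def RealRootedInterlacedBy (f g : Polynomial ℝ) : Prop :=
  ∃ (n : ℕ) (t : Fin (n + 1) → ℝ) (s : Fin n → ℝ),
    f.natDegree = n + 1 ∧ g.natDegree = n ∧
    Monotone t ∧ Monotone s ∧
    f.roots = Multiset.map t Finset.univ.val ∧
    g.roots = Multiset.map s Finset.univ.val ∧
    ∀ i : Fin n, t i.castSucc ≤ s i ∧ s i ≤ t i.succ

open Finset Filter

section Counting

variable {α : Type*} [LinearOrder α]

theorem Monotone.lt_iff_lt_card_filter_lt {m : ℕ} {t : Fin m → α} (ht : Monotone t)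
    (x : α) (i : Fin m) : t i < x ↔ (i : ℕ) < #{j | t j < x} := by
  constructor
  · intro hi
    have hsub : Iic i ⊆ ({j | t j < x} : Finset (Fin m)) := fun j hj =>
      mem_filter.2 ⟨mem_univ j, (ht (mem_Iic.1 hj)).trans_lt hi⟩
    simpa using card_le_card hsub
  · intro hi
    by_contra! hxi
    have hsub : ({j | t j < x} : Finset (Fin m)) ⊆ Iio i := fun j hj =>
      mem_Iio.2 (lt_of_not_ge fun hij => (ht hij).not_gt ((mem_filter.1 hj).2.trans_le hxi))
    simpa using (card_le_card hsub).trans_lt' hi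

theorem interlace_iff_card_filter_lt {n : ℕ} {t : Fin (n + 1) → α} {s : Fin n → α}
    (ht : Monotone t) (hs : Monotone s) :
    (∀ i, t i.castSucc ≤ s i ∧ s i ≤ t i.succ) ↔
      ∀ x, #{i | s i < x} ≤ #{j | t j < x} ∧ #{j | t j < x} ≤ #{i | s i < x} + 1 := by
  constructor
  · intro hint x
    have hcs := card_le_univ ({i | s i < x} : Finset (Fin n))
    have hct := card_le_univ ({j | t j < x} : Finset (Fin (n + 1)))
    simp only [Fintype.card_fin] at hcs hct
    constructor
    · by_contra! hlt
      set i : Fin n := ⟨#{j | t j < x}, by omega⟩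
      have hsi : s i < x := (hs.lt_iff_lt_card_filter_lt x i).2 hlt
      exact lt_irrefl _ ((ht.lt_iff_lt_card_filter_lt x i.castSucc).1
        ((hint i).1.trans_lt hsi))
    · by_contra! hlt
      set i : Fin n := ⟨#{i | s i < x}, by omega⟩
      have hti : t i.succ < x := (ht.lt_iff_lt_card_filter_lt x i.succ).2 (by simpa using hlt)
      exact lt_irrefl _ ((hs.lt_iff_lt_card_filter_lt x i).1 ((hint i).2.trans_lt hti))
  · intro hcount i
    constructor
    · by_contra! hlt
      have hsi := (hs.lt_iff_lt_card_filter_lt _ i).1 hlt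
      have hti := (ht.lt_iff_lt_card_filter_lt (t i.castSucc) i.castSucc).not.1 (lt_irrefl _)
      have hcnt := (hcount (t i.castSucc)).1
      simp only [Fin.val_castSucc] at hti
      omega
    · by_contra! hlt
      have hti := (ht.lt_iff_lt_card_filter_lt _ i.succ).1 hlt
      have hsi := (hs.lt_iff_lt_card_filter_lt (s i) i).not.1 (lt_irrefl _)
      have hcnt := (hcount (s i)).2
      simp only [Fin.val_succ] at hti
      omega

theorem Multiset.exists_monotone_map_univ_eq (S : Multiset α) {n : ℕ}
    (hn : Multiset.card S = n) : ∃ t : Fin n → α, Monotone t ∧ Multiset.map t univ.val = S := by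
  rw [← Multiset.sort_eq S (· ≤ ·)] at hn ⊢
  rw [Multiset.coe_card] at hn
  subst hn
  exact ⟨_, (List.sortedLE_iff_pairwise.2 (Multiset.pairwise_sort S _)).monotone_get,
    by rw [Fin.univ_val_map, List.ofFn_get]⟩

/-- Interlacing in terms of counting functions; unlike the description by sorted enumerations,
it is visibly unchanged when the same element is added to both multisets. -/
def Multiset.InterlacedBy (T S : Multiset α) : Prop :=
  ∀ x, Multiset.card (S.filter (· < x)) ≤ Multiset.card (T.filter (· < x)) ∧
    Multiset.card (T.filter (· < x)) ≤ Multiset.card (S.filter (· < x)) + 1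

theorem Multiset.interlacedBy_cons_cons_iff (c : α) {T S : Multiset α} :
    (c ::ₘ T).InterlacedBy (c ::ₘ S) ↔ T.InterlacedBy S := by
  refine forall_congr' fun x => ?_
  rw [Multiset.filter_cons, Multiset.filter_cons]
  split_ifs <;> simp

theorem Multiset.interlacedBy_map_univ_iff {n : ℕ} {t : Fin (n + 1) → α} {s : Fin n → α}
    (ht : Monotone t) (hs : Monotone s) :
    (Multiset.map t univ.val).InterlacedBy (Multiset.map s univ.val) ↔
      ∀ i, t i.castSucc ≤ s i ∧ s i ≤ t i.succ := by
  rw [interlace_iff_card_filter_lt ht hs]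
  simp only [Multiset.InterlacedBy, Multiset.filter_map, Multiset.card_map]
  rfl

end Counting

section StrictInterlacing

variable {α : Type*} [LinearOrder α]

def StrictlyInterlacedBy {n : ℕ} (t : Fin (n + 1) → α) (s : Fin n → α) : Prop :=
  ∀ i, t i.castSucc < s i ∧ s i < t i.succ

namespace StrictlyInterlacedBy

variable {n : ℕ} {t : Fin (n + 1) → α} {s : Fin n → α}

theorem strictMono_left (h : StrictlyInterlacedBy t s) : StrictMono t :=
  Fin.strictMono_iff_lt_succ.2 fun i => (h i).1.trans (h i).2

theorem left_lt_right_iff (h : StrictlyInterlacedBy t s) (ht : Monotone t) (j : Fin (n + 1))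
    (i : Fin n) : t j < s i ↔ (j : ℕ) ≤ i := by
  constructor
  · intro hji
    by_contra! hij
    exact ((h i).2.trans_le (ht (Fin.le_def.2 (by simpa using hij)))).not_gt hji
  · intro hji
    exact (ht (Fin.le_def.2 (by simpa using hji))).trans_lt (h i).1

theorem right_lt_left_iff (h : StrictlyInterlacedBy t s) (ht : Monotone t) (i : Fin n)
    (j : Fin (n + 1)) : s i < t j ↔ (i : ℕ) < j := by
  constructor
  · intro hij
    by_contra! hji
    exact ((h.left_lt_right_iff ht j i).2 hji).not_gt hij
  · intro hij
    exact (h i).2.trans_le (ht (Fin.le_def.2 (by simpa using hij)))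

theorem strictMono_right (h : StrictlyInterlacedBy t s) (ht : Monotone t) : StrictMono s :=
  fun i j hij => (h i).2.trans ((h.left_lt_right_iff ht _ _).2 (by simpa using hij))

end StrictlyInterlacedBy

theorem exists_strictlyInterlacedBy_of_gaps {k : ℕ} {s : Fin (k + 1) → α} {P : α → Prop}
    (hlo : ∃ z, P z ∧ z < s 0) (hhi : ∃ z, P z ∧ s (Fin.last k) < z)
    (hmid : ∀ i : Fin k, ∃ z, P z ∧ s i.castSucc < z ∧ z < s i.succ) :
    ∃ t : Fin (k + 2) → α, (∀ j, P (t j)) ∧ StrictlyInterlacedBy t s := by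
  obtain ⟨lo, hPlo, hlo⟩ := hlo
  obtain ⟨hi, hPhi, hhi⟩ := hhi
  choose u hPu hu using hmid
  refine ⟨Fin.cons lo (Fin.snoc u hi), fun j => ?_, fun i => ⟨?_, ?_⟩⟩
  · refine Fin.cases hPlo (fun j => ?_) j
    refine Fin.lastCases ?_ (fun j => ?_) j <;> simp [hPhi, hPu]
  · refine Fin.cases ?_ (fun i => ?_) i
    · simpa using hlo
    · simpa [← Fin.succ_castSucc] using (hu i).2
  · refine Fin.lastCases ?_ (fun i => ?_) i
    · simpa using hhi
    · simpa using (hu i).1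

end StrictInterlacing

theorem prod_sub_mul_prod_sub_neg {ι : Type*} [Fintype ι] {t : ι → ℝ} {x y : ℝ} (j₀ : ι)
    (hx : x < t j₀) (hy : t j₀ < y) (hout : ∀ j ≠ j₀, t j < x ∨ y < t j) :
    (∏ j, (x - t j)) * ∏ j, (y - t j) < 0 := by
  classical
  rw [← prod_mul_distrib, ← mul_prod_erase univ _ (mem_univ j₀)]
  refine mul_neg_of_neg_of_pos (mul_neg_of_neg_of_pos (by linarith) (by linarith))
    (prod_pos fun j hj => ?_)
  rcases hout j (ne_of_mem_erase hj) with h | h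
  · exact mul_pos (by linarith) (by linarith)
  · exact mul_pos_of_neg_of_neg (by linarith) (by linarith)

theorem neg_one_pow_card_mul_prod_sub_pos {ι : Type*} [Fintype ι] {t : ι → ℝ} {x : ℝ}
    (h : ∀ j, x < t j) : 0 < (-1) ^ Fintype.card ι * ∏ j, (x - t j) := by
  have hflip : (-1 : ℝ) ^ Fintype.card ι * ∏ j, (x - t j) = ∏ j, (t j - x) := by
    rw [← card_univ, ← prod_const, ← prod_mul_distrib]
    exact prod_congr rfl fun j _ => by ring
  rw [hflip]
  exact prod_pos fun j _ => sub_pos.2 (h j)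

namespace Polynomial

section IsDomain

variable {R : Type*} [CommRing R] [IsDomain R] {p : R[X]}

theorem natDegree_X_sub_C_mul (c : R) (hp : p ≠ 0) :
    ((X - C c) * p).natDegree = p.natDegree + 1 := by
  rw [natDegree_mul (X_sub_C_ne_zero c) hp, natDegree_X_sub_C, add_comm]

theorem roots_X_sub_C_mul (c : R) (hp : p ≠ 0) : ((X - C c) * p).roots = c ::ₘ p.roots := by
  rw [roots_mul (mul_ne_zero (X_sub_C_ne_zero c) hp), roots_X_sub_C, Multiset.singleton_add]

theorem Monic.eval_eq_prod_sub (hp : p.Monic) {m : ℕ} {t : Fin m → R}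
    (hdeg : p.natDegree = m) (hroots : p.roots = Multiset.map t univ.val) (x : R) :
    p.eval x = ∏ j, (x - t j) := by
  conv_lhs => rw [← prod_multiset_X_sub_C_of_monic_of_roots_card_eq hp (by simp [hroots, hdeg])]
  rw [hroots, Multiset.map_map, eval_multiset_prod, Multiset.map_map, prod_eq_multiset_prod]
  simp [Function.comp_def]

theorem isRoot_of_roots_eq_map {m : ℕ} {t : Fin m → R}
    (hroots : p.roots = Multiset.map t univ.val) (j : Fin m) : p.IsRoot (t j) :=
  isRoot_of_mem_roots (hroots ▸ Multiset.mem_map_of_mem t (mem_univ_val j))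

theorem roots_eq_map_of_injective (hp : p ≠ 0) {m : ℕ} {t : Fin m → R}
    (hdeg : p.natDegree = m) (ht : Function.Injective t) (hroot : ∀ j, p.IsRoot (t j)) :
    p.roots = Multiset.map t univ.val := by
  have hle : Multiset.map t univ.val ≤ p.roots :=
    (Multiset.le_iff_subset (univ.nodup.map ht)).2 fun x hx => by
      obtain ⟨j, -, rfl⟩ := Multiset.mem_map.1 hx
      exact (mem_roots hp).2 (hroot j)
  exact (Multiset.eq_of_le_of_card_le hle (by simpa [hdeg] using p.card_roots')).symm

end IsDomain

theorem exists_isRoot_mem_Ioo_of_eval_mul_neg (p : ℝ[X]) {x y : ℝ} (hxy : x ≤ y)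
    (h : p.eval x * p.eval y < 0) : ∃ z ∈ Set.Ioo x y, p.IsRoot z := by
  rcases mul_neg_iff.1 h with ⟨hx, hy⟩ | ⟨hx, hy⟩
  · exact intermediate_value_Ioo' hxy p.continuous.continuousOn ⟨hy, hx⟩
  · exact intermediate_value_Ioo hxy p.continuous.continuousOn ⟨hx, hy⟩

theorem Monic.exists_isRoot_gt {p : ℝ[X]} (hp : p.Monic) {y : ℝ} (hy : p.eval y < 0) :
    ∃ z, y < z ∧ p.IsRoot z := by
  have hdeg : 0 < p.degree := natDegree_pos_iff_degree_pos.1 <|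
    Nat.pos_of_ne_zero fun h0 => by norm_num [hp.natDegree_eq_zero.1 h0] at hy
  have htop := tendsto_atTop_of_leadingCoeff_nonneg p hdeg (by simp [hp.leadingCoeff])
  obtain ⟨w, hw, hyw⟩ := ((htop.eventually_gt_atTop 0).and (eventually_gt_atTop y)).exists
  obtain ⟨z, hz, hz0⟩ :=
    p.exists_isRoot_mem_Ioo_of_eval_mul_neg hyw.le (mul_neg_of_neg_of_pos hy hw)
  exact ⟨z, hz.1, hz0⟩

theorem Monic.eventually_atBot_neg_one_pow_mul_eval_pos {p : ℝ[X]} (hp : p.Monic) :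
    ∀ᶠ x in atBot, 0 < (-1) ^ p.natDegree * p.eval x := by
  have hne : ((-1 : ℝ) ^ p.natDegree) ≠ 0 := by simp
  have hequiv := (C ((-1 : ℝ) ^ p.natDegree) * p).isEquivalent_atBot_lead
  rw [natDegree_C_mul hne, leadingCoeff_mul, leadingCoeff_C, hp.leadingCoeff, mul_one] at hequiv
  have hpos : ∀ᶠ x : ℝ in atBot, 0 < (-1) ^ p.natDegree * x ^ p.natDegree := by
    filter_upwards [eventually_lt_atBot 0] with x hx
    rw [← mul_pow]
    exact pow_pos (by linarith) _
  simpa using hequiv.eventually_pos hpos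

theorem Monic.exists_isRoot_lt {p : ℝ[X]} (hp : p.Monic) {y : ℝ}
    (hy : (-1) ^ p.natDegree * p.eval y < 0) : ∃ z, z < y ∧ p.IsRoot z := by
  obtain ⟨w, hw, hwy⟩ :=
    (hp.eventually_atBot_neg_one_pow_mul_eval_pos.and (eventually_lt_atBot y)).exists
  have hsq : ((-1 : ℝ) ^ p.natDegree) * (-1) ^ p.natDegree = 1 := by
    rw [← mul_pow]; norm_num
  obtain ⟨z, hz, hz0⟩ := p.exists_isRoot_mem_Ioo_of_eval_mul_neg hwy.le
    (by linear_combination mul_neg_of_pos_of_neg hw hy - p.eval w * p.eval y * hsq)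
  exact ⟨z, hz.2, hz0⟩

end Polynomial

namespace StrictlyInterlacedBy

variable {p : ℝ[X]}

theorem eval_mul_eval_neg_of_roots_eq_left {m : ℕ} {t : Fin (m + 1 + 1) → ℝ}
    {s : Fin (m + 1) → ℝ} (h : StrictlyInterlacedBy t s) (ht : Monotone t) (hp : p.Monic)
    (hdeg : p.natDegree = m + 2) (hroots : p.roots = Multiset.map t univ.val) (i : Fin m) :
    p.eval (s i.castSucc) * p.eval (s i.succ) < 0 := by
  rw [hp.eval_eq_prod_sub hdeg hroots, hp.eval_eq_prod_sub hdeg hroots]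
  refine prod_sub_mul_prod_sub_neg i.succ.castSucc ?_ (h i.succ).1 fun j hj => ?_
  · rw [← Fin.succ_castSucc]
    exact (h i.castSucc).2
  · rw [h.left_lt_right_iff ht, h.right_lt_left_iff ht]
    simp only [ne_eq, Fin.ext_iff, Fin.val_castSucc, Fin.val_succ] at hj ⊢
    omega

theorem eval_mul_eval_neg_of_roots_eq_right {n : ℕ} {t : Fin (n + 1) → ℝ} {s : Fin n → ℝ}
    (h : StrictlyInterlacedBy t s) (ht : Monotone t) (hp : p.Monic) (hdeg : p.natDegree = n)
    (hroots : p.roots = Multiset.map s univ.val) (i : Fin n) :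
    p.eval (t i.castSucc) * p.eval (t i.succ) < 0 := by
  rw [hp.eval_eq_prod_sub hdeg hroots, hp.eval_eq_prod_sub hdeg hroots]
  refine prod_sub_mul_prod_sub_neg i (h i).1 (h i).2 fun j hj => ?_
  rw [h.right_lt_left_iff ht, h.left_lt_right_iff ht]
  simp only [ne_eq, Fin.ext_iff, Fin.val_castSucc, Fin.val_succ] at hj ⊢
  omega

end StrictlyInterlacedBy

theorem realRootedInterlacedBy_iff {f g : ℝ[X]} :
    RealRootedInterlacedBy f g ↔ f.natDegree = g.natDegree + 1 ∧
      Multiset.card f.roots = f.natDegree ∧ Multiset.card g.roots = g.natDegree ∧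
      f.roots.InterlacedBy g.roots := by
  constructor
  · rintro ⟨n, t, s, hf, hg, ht, hs, hrf, hrg, hint⟩
    refine ⟨by omega, by simp [hrf, hf], by simp [hrg, hg], ?_⟩
    rwa [hrf, hrg, Multiset.interlacedBy_map_univ_iff ht hs]
  · rintro ⟨hdeg, hcf, hcg, hI⟩
    obtain ⟨t, ht, hrf⟩ := f.roots.exists_monotone_map_univ_eq (hcf.trans hdeg)
    obtain ⟨s, hs, hrg⟩ := g.roots.exists_monotone_map_univ_eq hcg
    rw [← hrf, ← hrg, Multiset.interlacedBy_map_univ_iff ht hs] at hI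
    exact ⟨g.natDegree, t, s, hdeg, rfl, ht, hs, hrf.symm, hrg.symm, hI⟩

theorem realRootedInterlacedBy_X_sub_C_mul_iff {f g : ℝ[X]} (c : ℝ) (hf : f ≠ 0) (hg : g ≠ 0) :
    RealRootedInterlacedBy ((X - C c) * f) ((X - C c) * g) ↔ RealRootedInterlacedBy f g := by
  simp [realRootedInterlacedBy_iff, roots_X_sub_C_mul c hf, roots_X_sub_C_mul c hg,
    natDegree_X_sub_C_mul c hf, natDegree_X_sub_C_mul c hg, Multiset.interlacedBy_cons_cons_iff]

namespace ThreeTermRecurrence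

variable {f g h : ℝ[X]} {a b : ℝ}

theorem eval_eq_mul_eval_of_isRoot (hrec : f = (X + C a) * g + C b * h) {x : ℝ}
    (hx : g.IsRoot x) : f.eval x = b * h.eval x := by
  simp [hrec, hx.eq_zero]

theorem eval_mul_eval_neg_iff (hb : b ≠ 0) (hrec : f = (X + C a) * g + C b * h) {x y : ℝ}
    (hx : g.IsRoot x) (hy : g.IsRoot y) :
    f.eval x * f.eval y < 0 ↔ h.eval x * h.eval y < 0 := by
  rw [eval_eq_mul_eval_of_isRoot hrec hx, eval_eq_mul_eval_of_isRoot hrec hy, mul_mul_mul_comm]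
  simpa using mul_lt_mul_iff_of_pos_left (c := 0) (mul_self_pos.2 hb)

theorem isRoot_of_isRoot_of_isRoot (hrec : f = (X + C a) * g + C b * h) {x : ℝ}
    (hgx : g.IsRoot x) (hhx : h.IsRoot x) : f.IsRoot x := by
  simp [IsRoot, eval_eq_mul_eval_of_isRoot hrec hgx, hhx.eq_zero]

theorem exists_X_sub_C_mul_of_isRoot (hb : b ≠ 0) (hrec : f = (X + C a) * g + C b * h) {c : ℝ}
    (hfc : f.IsRoot c) (hgc : g.IsRoot c) :
    ∃ f' g' h', f = (X - C c) * f' ∧ g = (X - C c) * g' ∧ h = (X - C c) * h' ∧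
      f' = (X + C a) * g' + C b * h' := by
  have hhc : h.IsRoot c := by
    have := eval_eq_mul_eval_of_isRoot hrec hgc
    rw [hfc.eq_zero, zero_eq_mul] at this
    exact this.resolve_left hb
  obtain ⟨f', rfl⟩ := dvd_iff_isRoot.2 hfc
  obtain ⟨g', rfl⟩ := dvd_iff_isRoot.2 hgc
  obtain ⟨h', rfl⟩ := dvd_iff_isRoot.2 hhc
  refine ⟨f', g', h', rfl, rfl, rfl, mul_left_cancel₀ (X_sub_C_ne_zero c) ?_⟩
  rw [hrec]
  ring

theorem realRootedInterlacedBy_right_of_left (hf : f.Monic) (hh : h ≠ 0)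
    (hdeg : g.natDegree = h.natDegree + 1) (hb : b ≠ 0) (hrec : f = (X + C a) * g + C b * h)
    (hcop : ∀ x, g.IsRoot x → ¬ f.IsRoot x) (H : RealRootedInterlacedBy f g) :
    RealRootedInterlacedBy g h := by
  obtain ⟨n, t, s, hdf, hdg, ht, hs, hrf, hrg, hint⟩ := H
  obtain rfl : n = h.natDegree + 1 := by omega
  have hgs := isRoot_of_roots_eq_map hrg
  have hts : StrictlyInterlacedBy t s := fun i =>
    ⟨(hint i).1.lt_of_ne fun he => hcop _ (hgs i) (he ▸ isRoot_of_roots_eq_map hrf _),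
      (hint i).2.lt_of_ne fun he => hcop _ (hgs i) (he ▸ isRoot_of_roots_eq_map hrf _)⟩
  have hsign (i : Fin h.natDegree) : h.eval (s i.castSucc) * h.eval (s i.succ) < 0 :=
    (eval_mul_eval_neg_iff hb hrec (hgs _) (hgs _)).1
      (hts.eval_mul_eval_neg_of_roots_eq_left ht hf hdf hrf i)
  choose r hr hroot using fun i =>
    h.exists_isRoot_mem_Ioo_of_eval_mul_neg (hs (Fin.castSucc_le_succ i)) (hsign i)
  have hsr : StrictlyInterlacedBy s r := hr
  refine ⟨h.natDegree, s, r, hdg, rfl, hs, (hsr.strictMono_right hs).monotone, hrg,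
    roots_eq_map_of_injective hh rfl (hsr.strictMono_right hs).injective hroot,
    fun i => ⟨(hr i).1.le, (hr i).2.le⟩⟩

theorem realRootedInterlacedBy_left_of_right (hf : f.Monic) (hh : h.Monic)
    (hdeg : f.natDegree = g.natDegree + 1) (hb : b < 0) (hrec : f = (X + C a) * g + C b * h)
    (hcop : ∀ x, g.IsRoot x → ¬ h.IsRoot x) (H : RealRootedInterlacedBy g h) :
    RealRootedInterlacedBy f g := by
  obtain ⟨k, s, r, hdg, hdh, hs, -, hrg, hrh, hint⟩ := H
  have hgs := isRoot_of_roots_eq_map hrg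
  have hsr : StrictlyInterlacedBy s r := fun i =>
    ⟨(hint i).1.lt_of_ne fun he => hcop _ (he ▸ hgs _) (isRoot_of_roots_eq_map hrh i),
      (hint i).2.lt_of_ne fun he => hcop _ (he ▸ hgs _) (isRoot_of_roots_eq_map hrh i)⟩
  have hmid (i : Fin k) : ∃ z, f.IsRoot z ∧ s i.castSucc < z ∧ z < s i.succ := by
    obtain ⟨z, hz, hfz⟩ := f.exists_isRoot_mem_Ioo_of_eval_mul_neg (hs (Fin.castSucc_le_succ i))
      ((eval_mul_eval_neg_iff hb.ne hrec (hgs _) (hgs _)).2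
        (hsr.eval_mul_eval_neg_of_roots_eq_right hs hh hdh hrh i))
    exact ⟨z, hfz, hz⟩
  have hhi : ∃ z, f.IsRoot z ∧ s (Fin.last k) < z := by
    have hpos : 0 < h.eval (s (Fin.last k)) := by
      rw [hh.eval_eq_prod_sub hdh hrh]
      exact prod_pos fun j _ => sub_pos.2 ((hsr.right_lt_left_iff hs _ _).2 (by simp))
    obtain ⟨z, hz, hfz⟩ := hf.exists_isRoot_gt (y := s (Fin.last k))
      (by rw [eval_eq_mul_eval_of_isRoot hrec (hgs _)]; exact mul_neg_of_neg_of_pos hb hpos)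
    exact ⟨z, hfz, hz⟩
  have hlo : ∃ z, f.IsRoot z ∧ z < s 0 := by
    have hpos : 0 < (-1) ^ k * h.eval (s 0) := by
      rw [hh.eval_eq_prod_sub hdh hrh]
      simpa using neg_one_pow_card_mul_prod_sub_pos (t := r) (x := s 0) fun j =>
        (hsr.left_lt_right_iff hs _ _).2 (by simp)
    have hf0 : (-1) ^ f.natDegree * f.eval (s 0) = b * ((-1) ^ k * h.eval (s 0)) := by
      rw [eval_eq_mul_eval_of_isRoot hrec (hgs _), hdeg, hdg]
      ring
    obtain ⟨z, hz, hfz⟩ := hf.exists_isRoot_lt (hf0 ▸ mul_neg_of_neg_of_pos hb hpos)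
    exact ⟨z, hfz, hz⟩
  obtain ⟨t, hroot, hts⟩ := exists_strictlyInterlacedBy_of_gaps hlo hhi hmid
  exact ⟨k + 1, t, s, by omega, hdg, hts.strictMono_left.monotone, hs,
    roots_eq_map_of_injective hf.ne_zero (by omega) hts.strictMono_left.injective hroot, hrg,
    fun i => ⟨(hts i).1.le, (hts i).2.le⟩⟩

end ThreeTermRecurrence

theorem interlacing_transfer (f g h : Polynomial ℝ) (a b : ℝ)
    (hf : f.Monic) (hg : g.Monic) (hh : h.Monic)
    (hdeg1 : f.natDegree = g.natDegree + 1) (hdeg2 : g.natDegree = h.natDegree + 1)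
    (hb : b < 0)
    (hrec : f = (Polynomial.X + Polynomial.C a) * g + Polynomial.C b * h) :
    RealRootedInterlacedBy f g ↔ RealRootedInterlacedBy g h := by
  induction hn : h.natDegree using Nat.strong_induction_on generalizing f g h with
  | _ n ih =>
    by_cases hcommon : ∃ c, f.IsRoot c ∧ g.IsRoot c
    · obtain ⟨c, hfc, hgc⟩ := hcommon
      obtain ⟨f', g', h', rfl, rfl, rfl, hrec'⟩ :=
        ThreeTermRecurrence.exists_X_sub_C_mul_of_isRoot hb.ne hrec hfc hgc
      have hf' := (monic_X_sub_C c).of_mul_monic_left hf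
      have hg' := (monic_X_sub_C c).of_mul_monic_left hg
      have hh' := (monic_X_sub_C c).of_mul_monic_left hh
      simp only [natDegree_X_sub_C_mul c hf'.ne_zero, natDegree_X_sub_C_mul c hg'.ne_zero,
        natDegree_X_sub_C_mul c hh'.ne_zero] at hdeg1 hdeg2 hn
      rw [realRootedInterlacedBy_X_sub_C_mul_iff c hf'.ne_zero hg'.ne_zero,
        realRootedInterlacedBy_X_sub_C_mul_iff c hg'.ne_zero hh'.ne_zero]
      exact ih _ (by omega) f' g' h' hf' hg' hh' (by omega) (by omega) hrec' rfl
    · have hfg (x : ℝ) (hgx : g.IsRoot x) : ¬ f.IsRoot x := fun hfx => hcommon ⟨x, hfx, hgx⟩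
      exact ⟨ThreeTermRecurrence.realRootedInterlacedBy_right_of_left hf hh.ne_zero hdeg2 hb.ne
          hrec hfg,
        ThreeTermRecurrence.realRootedInterlacedBy_left_of_right hf hh hdeg1 hb hrec
          fun x hgx hhx => hfg x hgx (ThreeTermRecurrence.isRoot_of_isRoot_of_isRoot hrec hgx hhx)⟩
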